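/- Let G be a finite abelian group and let S be a zero-sum free sequence over G containing no element of order 2, which admits a decomposition S = S₁·⋯·S_x where each S_i is squarefree of length |S_i| ≥ 3. Then f(S) ≥ 2|S|. -/

import Mathlib

open Multiset

/-- `S` is zero-sum free: no nonempty subsequence (sub-multiset) of `S` sums to `0`. -/
def ZeroSumFree {G : Type*} [AddCommGroup G] (S : Multiset G) : Prop :=
  ∀ T : Multiset G, T ≤ S → T ≠ 0 → T.sum ≠ 0

/-- `Σ(S)`: the set of elements expressible as the sum of a nonempty subsequence of `S`. -/
def SubSums {G : Type*} [AddCommGroup G] (S : Multiset G) : Set G :=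
  {x | ∃ T : Multiset G, T ≤ S ∧ T ≠ 0 ∧ T.sum = x}

/-- `f(S) = |Σ(S)|`. -/
noncomputable def fseq {G : Type*} [AddCommGroup G] (S : Multiset G) : ℕ :=
  (SubSums S).ncard

/-- `S` is `g`-smooth: `S = (n₁g)(n₂g)⋯(n_lg)` with `1 = n₁ ≤ ⋯ ≤ n_l`,
`n = n₁ + ⋯ + n_l < ord(g)` and `Σ(S) = {g, 2g, …, ng}`. -/
def IsSmoothAt {G : Type*} [AddCommGroup G] (g : G) (S : Multiset G) : Prop :=
  ∃ ns : List ℕ,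
    ns.Pairwise (· ≤ ·) ∧ ns.head? = some 1 ∧
    S = ↑(ns.map (fun n => n • g)) ∧
    ns.sum < addOrderOf g ∧
    SubSums S = {x | ∃ m : ℕ, 1 ≤ m ∧ m ≤ ns.sum ∧ x = m • g}

/-- `S` is smooth if it is `g`-smooth for some `g ∈ G`. -/
def IsSmooth {G : Type*} [AddCommGroup G] (S : Multiset G) : Prop :=
  ∃ g : G, IsSmoothAt g S

/-!
Σ is superadditive on a zero-sum free product: Σ(A) and σ(A) + Σ(B) are disjoint parts of
Σ(AB). Cutting every block into squarefree blocks of length 3, 4 or 5 therefore reduces the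
theorem to such a block S with sum σ. Its subsums include σ, the terms of S and the complements
σ - z of single terms: 2|S| + 1 - m distinct elements, where m counts the terms g with 2g = σ.
If m ≥ 2 (so |S| ≥ 4), fix such a g; every other such w yields a further subsum, g + w, σ + w or
σ + g, except in a single configuration, a copy of {1, 3, 9, 10, 11} ⊆ ℤ/16, where 2σ does.
-/

theorem Multiset.pair_le_of_ne {α : Type*} {s : Multiset α} {a b : α} (hab : a ≠ b)
    (ha : a ∈ s) (hb : b ∈ s) : ({a, b} : Multiset α) ≤ s :=
  (cons_le_of_notMem (by simpa using hab)).2 ⟨ha, singleton_le.2 hb⟩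

section General

variable {G : Type*} [AddCommGroup G] {S T : Multiset G} {g h x y v : G}

theorem Multiset.sum_tsub_of_le [DecidableEq G] (hT : T ≤ S) : (S - T).sum = S.sum - T.sum := by
  rw [eq_sub_iff_add_eq, ← sum_add, tsub_add_cancel_of_le hT]

namespace ZeroSumFree

theorem mono (hT : T ≤ S) (hS : ZeroSumFree S) : ZeroSumFree T :=
  fun U hU => hS U (hU.trans hT)

theorem ne_zero_of_mem (hS : ZeroSumFree S) (hg : g ∈ S) : g ≠ 0 := fun h0 =>
  hS {g} (singleton_le.2 hg) (singleton_ne_zero g) (by simp [h0])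

theorem sum_ne_zero (hS : ZeroSumFree S) (h0 : S ≠ 0) : S.sum ≠ 0 :=
  hS S le_rfl h0

theorem add_ne_zero (hS : ZeroSumFree S) (h2 : ∀ g ∈ S, addOrderOf g ≠ 2)
    (hg : g ∈ S) (hh : h ∈ S) : g + h ≠ 0 := by
  rcases eq_or_ne g h with rfl | hne
  · exact fun hgg => h2 g hg (addOrderOf_eq_prime (by rwa [two_nsmul]) (hS.ne_zero_of_mem hg))
  · exact fun hgh => hS {g, h} (pair_le_of_ne hne hg hh) (by simp) (by simpa using hgh)

theorem sum_ne_sum_of_card_lt (hS : ZeroSumFree S) (hT : T ≤ S) (hlt : card T < card S) :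
    T.sum ≠ S.sum := by
  classical
  intro he
  refine hS (S - T) tsub_le_self (fun h0 => ?_) (by rw [sum_tsub_of_le hT, he, sub_self])
  have := card_mono (tsub_eq_zero_iff_le.1 h0)
  omega

theorem mem_ne_sum (hS : ZeroSumFree S) (hg : g ∈ S) (h2 : 2 ≤ card S) : g ≠ S.sum := by
  simpa using hS.sum_ne_sum_of_card_lt (singleton_le.2 hg) (by simp; omega)

end ZeroSumFree

theorem mem_subSums_of_mem (hg : g ∈ S) : g ∈ SubSums S :=
  ⟨{g}, singleton_le.2 hg, singleton_ne_zero g, sum_singleton g⟩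

theorem add_mem_subSums (hne : g ≠ h) (hg : g ∈ S) (hh : h ∈ S) : g + h ∈ SubSums S :=
  ⟨{g, h}, pair_le_of_ne hne hg hh, by simp, by simp⟩

theorem sum_mem_subSums (h0 : S ≠ 0) : S.sum ∈ SubSums S :=
  ⟨S, le_rfl, h0, rfl⟩

theorem sum_sub_mem_subSums (hg : g ∈ S) (h2 : 2 ≤ card S) : S.sum - g ∈ SubSums S := by
  classical
  refine ⟨S - {g}, tsub_le_self, fun h0 => ?_, by rw [sum_tsub_of_le (singleton_le.2 hg)]; simp⟩
  have := card_mono (tsub_eq_zero_iff_le.1 h0)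
  simp at this
  omega

theorem subSums_mono (h : T ≤ S) : SubSums T ⊆ SubSums S :=
  fun _ ⟨U, hU, h0, hx⟩ => ⟨U, hU.trans h, h0, hx⟩

theorem subSums_finite (S : Multiset G) : (SubSums S).Finite :=
  (finite_toSet (S.powerset.map sum)).subset fun _ ⟨U, hU, _, hx⟩ =>
    mem_map.2 ⟨U, mem_powerset.2 hU, hx⟩

theorem card_le_fseq {N : Finset G} (hN : ↑N ⊆ SubSums S) : N.card ≤ fseq S := by
  simpa [fseq] using Set.ncard_le_ncard hN (subSums_finite S)

/-- `Σ(S)` and `σ(S) + Σ(T)` are disjoint: `U.sum = σ(S) + V.sum` would make `(S - U) + V` a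
nonempty zero sum. -/
theorem ZeroSumFree.fseq_add_le (hST : ZeroSumFree (S + T)) :
    fseq S + fseq T ≤ fseq (S + T) := by
  classical
  have hdisj : Disjoint (SubSums S) ((S.sum + ·) '' SubSums T) := by
    refine Set.disjoint_left.2 fun x ⟨U, hU, _, hUx⟩ ⟨y, ⟨V, hV, hV0, hVy⟩, hyx⟩ => ?_
    refine hST (S - U + V) (add_le_add tsub_le_self hV) (by simp [hV0]) ?_
    rw [sum_add, sum_tsub_of_le hU, hUx, hVy, ← hyx, sub_add_cancel_left, neg_add_cancel]
  have hsub : SubSums S ∪ (S.sum + ·) '' SubSums T ⊆ SubSums (S + T) := by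
    rintro x (hx | ⟨y, ⟨V, hV, hV0, rfl⟩, rfl⟩)
    · exact subSums_mono (le_add_right S T) hx
    · exact ⟨S + V, add_le_add_right hV S, by simp [hV0], sum_add S V⟩
  calc fseq S + fseq T = (SubSums S ∪ (S.sum + ·) '' SubSums T).ncard := by
        rw [Set.ncard_union_eq hdisj (subSums_finite S) ((subSums_finite T).image _),
          Set.ncard_image_of_injective _ (add_right_injective _)]
        rfl
    _ ≤ fseq (S + T) := Set.ncard_le_ncard hsub (subSums_finite _)

theorem add_ne_sum_add_of_halves (hσ : S.sum ≠ 0) (hx : x + x = S.sum) (hy : y + y = S.sum)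
    (hv : v + v = S.sum) : x + y ≠ S.sum + v := fun h =>
  hσ (by linear_combination (norm := module) hx + hy - hv - 2 • h)

theorem add_add_ne_sum_of_halves (hσ : S.sum ≠ 0) (hx : x + x = S.sum) (hy : y + y = S.sum) :
    (x + y) + (x + y) ≠ S.sum := fun h =>
  hσ (by linear_combination (norm := module) h - hx - hy)

theorem sum_add_add_ne_sum (hS : ZeroSumFree S) (h2 : ∀ g ∈ S, addOrderOf g ≠ 2)
    (hx : x ∈ S) (hσx : S.sum + x ∈ S) : (S.sum + x) + (S.sum + x) ≠ S.sum := fun h =>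
  hS.add_ne_zero h2 hx hσx (by linear_combination (norm := module) h)

theorem add_le_of_halves_of_ne_halves {P Q : Multiset G} (hP : P.Nodup) (hQ : Q.Nodup)
    (hPS : ∀ x ∈ P, x ∈ S ∧ x + x = S.sum) (hQS : ∀ y ∈ Q, y ∈ S ∧ y + y ≠ S.sum) :
    P + Q ≤ S := by
  refine (le_iff_subset (nodup_add.2 ⟨hP, hQ, disjoint_left.2 fun hxP hxQ =>
    (hQS _ hxQ).2 (hPS _ hxP).2⟩)).2 fun x hx => ?_
  rcases mem_add.1 hx with hx | hx
  exacts [(hPS x hx).1, (hQS x hx).1]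

end General

section Halves

variable {G : Type*} [AddCommGroup G] [DecidableEq G] {S : Multiset G} {g w v : G}

/-- The terms `g` of `S` with `2g = σ(S)`: for `|S| ≥ 3` these are exactly the terms that are
also complements `σ(S) - z` of a single term. -/
def halvesOfSum (S : Multiset G) : Finset G :=
  S.toFinset.filter (fun g => g + g = S.sum)

def trivialSubSums (S : Multiset G) : Finset G :=
  insert S.sum (S.toFinset ∪ S.toFinset.image (S.sum - ·))

theorem mem_halvesOfSum : g ∈ halvesOfSum S ↔ g ∈ S ∧ g + g = S.sum := by
  simp [halvesOfSum]

theorem mem_trivialSubSums :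
    v ∈ trivialSubSums S ↔ v = S.sum ∨ v ∈ S ∨ ∃ z ∈ S, S.sum - z = v := by
  simp [trivialSubSums]

theorem trivialSubSums_subset_subSums (h2 : 2 ≤ card S) : ↑(trivialSubSums S) ⊆ SubSums S := by
  intro v hv
  rcases mem_trivialSubSums.1 hv with rfl | hv | ⟨z, hz, rfl⟩
  · exact sum_mem_subSums (card_pos.1 (by omega))
  · exact mem_subSums_of_mem hv
  · exact sum_sub_mem_subSums hz h2

theorem card_trivialSubSums_add_card_halvesOfSum (hS : ZeroSumFree S) (hnd : S.Nodup)
    (h3 : 3 ≤ card S) : (trivialSubSums S).card + (halvesOfSum S).card = 2 * card S + 1 := by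
  have hinter : S.toFinset ∩ S.toFinset.image (S.sum - ·) = halvesOfSum S := by
    ext g
    simp only [Finset.mem_inter, Finset.mem_image, mem_toFinset, mem_halvesOfSum]
    constructor
    · rintro ⟨hg, z, hz, rfl⟩
      refine ⟨hg, ?_⟩
      by_contra hne
      have hzg : z ≠ S.sum - z := fun h => hne (by rw [← h]; exact eq_sub_iff_add_eq.1 h)
      exact hS.sum_ne_sum_of_card_lt (pair_le_of_ne hzg hz hg) (by simp; omega) (by simp)
    · rintro ⟨hg, hgg⟩
      exact ⟨hg, g, hg, by rw [← hgg]; abel⟩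
  have hσ : S.sum ∉ S.toFinset ∪ S.toFinset.image (S.sum - ·) := by
    simp only [Finset.mem_union, Finset.mem_image, mem_toFinset, sub_eq_self, not_or,
      not_exists, not_and]
    exact ⟨fun h => hS.mem_ne_sum h (by omega) rfl, fun z hz => hS.ne_zero_of_mem hz⟩
  have hcard := Finset.card_union_add_card_inter S.toFinset (S.toFinset.image (S.sum - ·))
  rw [hinter, Finset.card_image_of_injective _ sub_right_injective,
    toFinset_card_of_nodup hnd] at hcard
  rw [trivialSubSums, Finset.card_insert_of_notMem hσ]
  omega

theorem two_mul_card_le_fseq_of_disjoint (hS : ZeroSumFree S) (hnd : S.Nodup) (h3 : 3 ≤ card S)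
    {N : Finset G} (hN : ↑N ⊆ SubSums S) (hdisj : Disjoint (trivialSubSums S) N)
    (hcard : (halvesOfSum S).card ≤ N.card + 1) : 2 * card S ≤ fseq S := by
  have hle : (trivialSubSums S ∪ N).card ≤ fseq S := card_le_fseq (by
    rw [Finset.coe_union]
    exact Set.union_subset (trivialSubSums_subset_subSums (by omega)) hN)
  rw [Finset.card_union_of_disjoint hdisj] at hle
  have := card_trivialSubSums_add_card_halvesOfSum hS hnd h3
  omega

end Halves

section SmallBlocks

variable {G : Type*} [AddCommGroup G] [DecidableEq G] {S : Multiset G} {g w w' x : G}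

theorem card_halvesOfSum_le_one (hS : ZeroSumFree S) (h2 : ∀ g ∈ S, addOrderOf g ≠ 2)
    (hk : card S = 3) : (halvesOfSum S).card ≤ 1 := by
  by_contra! hm
  obtain ⟨g, hg, h, hh, hne⟩ := Finset.one_lt_card.1 hm
  rw [mem_halvesOfSum] at hg hh
  have hpair := pair_le_of_ne hne hg.1 hh.1
  obtain ⟨z, hz⟩ : ∃ z, S - {g, h} = {z} := card_eq_one.1 (by rw [card_sub hpair, hk]; simp)
  have hzS : z ∈ S := mem_of_le tsub_le_self (hz ▸ mem_singleton_self z)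
  have hzsum : z = S.sum - (g + h) := by
    rw [← sum_singleton z, ← hz, sum_tsub_of_le hpair]; simp
  exact hS.add_ne_zero h2 hzS hzS (by rw [hzsum]; linear_combination (norm := module) -hg.2 - hh.2)

theorem add_notMem_trivialSubSums (hS : ZeroSumFree S) (h4 : 4 ≤ card S)
    (hg : g ∈ halvesOfSum S) (hw : w ∈ halvesOfSum S) (hne : g ≠ w) (hgw : g + w ∉ S) :
    g + w ∉ trivialSubSums S := by
  rw [mem_halvesOfSum] at hg hw
  rw [mem_trivialSubSums]
  rintro (h | h | ⟨z, hz, h⟩)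
  · exact hS.sum_ne_sum_of_card_lt (pair_le_of_ne hne hg.1 hw.1) (by simp; omega) (by simpa)
  · exact hgw h
  have hsum : g + w + z = S.sum := by rw [← h, sub_add_cancel]
  rcases eq_or_ne z g with rfl | hzg
  · exact hS.ne_zero_of_mem hw.1 (by linear_combination (norm := module) hsum - hg.2)
  rcases eq_or_ne z w with rfl | hzw
  · exact hS.ne_zero_of_mem hg.1 (by linear_combination (norm := module) hsum - hw.2)
  have hle : ({g, w, z} : Multiset G) ≤ S := by
    refine (le_iff_subset (by simpa using ⟨⟨hne, hzg.symm⟩, hzw.symm⟩)).2 fun x hx => ?_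
    simp only [insert_eq_cons, mem_cons, mem_singleton] at hx
    rcases hx with rfl | rfl | rfl
    exacts [hg.1, hw.1, hz]
  exact hS.sum_ne_sum_of_card_lt hle (by simp; omega) (by simp [← hsum, add_assoc])

theorem sum_add_notMem_trivialSubSums (hS : ZeroSumFree S) (h2 : ∀ g ∈ S, addOrderOf g ≠ 2)
    (hx : x ∈ S) (hσx : S.sum + x ∉ S) : S.sum + x ∉ trivialSubSums S := by
  rw [mem_trivialSubSums]
  rintro (h | h | ⟨z, hz, h⟩)
  · exact hS.ne_zero_of_mem hx (add_eq_left.1 h)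
  · exact hσx h
  · exact hS.add_ne_zero h2 hz hx (by linear_combination (norm := module) -h)

theorem halvesOfSum_card_add_three_le_and_eq_of_exceptional (hS : ZeroSumFree S)
    (h2 : ∀ g ∈ S, addOrderOf g ≠ 2) (h5 : card S ≤ 5) (hg : g ∈ halvesOfSum S)
    (hw : w ∈ halvesOfSum S) (hne : g ≠ w) (ha : g + w ∈ S) (hb : S.sum + w ∈ S)
    (hc : S.sum + g ∈ S) :
    (halvesOfSum S).card + 3 ≤ card S ∧ {g, w} + {g + w, S.sum + w, S.sum + g} = S := by
  rw [mem_halvesOfSum] at hg hw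
  have hk2 : 2 ≤ card S := by simpa using card_mono (pair_le_of_ne hne hg.1 hw.1)
  have hσ : S.sum ≠ 0 := hS.sum_ne_zero (card_pos.1 (by omega))
  set Q : Multiset G := {g + w, S.sum + w, S.sum + g}
  have hQ : Q.Nodup := by
    simp only [Q, insert_eq_cons, nodup_cons, mem_cons, mem_singleton, nodup_singleton, not_or]
    exact ⟨⟨fun h => hS.mem_ne_sum hg.1 hk2 (add_right_cancel h),
      fun h => hS.mem_ne_sum hw.1 hk2 (add_right_cancel ((add_comm w g).trans h))⟩,
      fun h => hne (add_left_cancel h).symm, trivial⟩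
  have hQS : ∀ y ∈ Q, y ∈ S ∧ y + y ≠ S.sum := by
    intro y hy
    simp only [Q, insert_eq_cons, mem_cons, mem_singleton] at hy
    rcases hy with rfl | rfl | rfl
    exacts [⟨ha, add_add_ne_sum_of_halves hσ hg.2 hw.2⟩, ⟨hb, sum_add_add_ne_sum hS h2 hw.1 hb⟩,
      ⟨hc, sum_add_add_ne_sum hS h2 hg.1 hc⟩]
  have hhalves : (halvesOfSum S).card + 3 ≤ card S := by
    have := card_mono (add_le_of_halves_of_ne_halves (halvesOfSum S).nodup hQ
      (fun x hx => mem_halvesOfSum.1 hx) hQS)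
    simp only [card_add, Finset.card_val, Q, insert_eq_cons, card_cons, card_singleton] at this
    omega
  refine ⟨hhalves, eq_of_le_of_card_le
    (add_le_of_halves_of_ne_halves (by simpa using hne) hQ (by simp [hg, hw]) hQS) ?_⟩
  simp [Q]
  omega

/-- `S = {g, w, g + w, σ + w, σ + g}` forces `w = 9g`, `σ = 2g` and `ord g = 16`, i.e.
`S = g·{1, 3, 9, 10, 11}` inside `ℤ/16`; there `2σ = w + (σ + w)` is a new subsum. -/
theorem two_mul_card_le_fseq_of_exceptional (hS : ZeroSumFree S) (hnd : S.Nodup)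
    (h2 : ∀ g ∈ S, addOrderOf g ≠ 2) (h5 : card S ≤ 5) (hg : g ∈ halvesOfSum S)
    (hw : w ∈ halvesOfSum S) (hne : g ≠ w) (ha : g + w ∈ S) (hb : S.sum + w ∈ S)
    (hc : S.sum + g ∈ S) : 2 * card S ≤ fseq S := by
  obtain ⟨hhalves, hM⟩ :=
    halvesOfSum_card_add_three_le_and_eq_of_exceptional hS h2 h5 hg hw hne ha hb hc
  rw [mem_halvesOfSum] at hg hw
  have hσ : S.sum ≠ 0 := hS.sum_ne_zero (card_pos.1 (by omega))
  have hsum := congrArg sum hM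
  simp only [sum_add, insert_eq_cons, sum_cons, sum_singleton] at hsum
  have h7 : 7 • g + w = 0 := by linear_combination (norm := module) hsum + 2 • hg.2 - hw.2
  have h16 : 16 • g = 0 := by linear_combination (norm := module) 2 • h7 + hg.2 - hw.2
  have h8 : 8 • g ≠ 0 := fun h8 => hne (by linear_combination (norm := module) h8 - h7)
  have hord : addOrderOf g = 16 := addOrderOf_eq_prime_pow (p := 2) (n := 3) h8 h16
  have hσ2 : S.sum = 2 • g := by linear_combination (norm := module) -hg.2
  have hS' : S = ({1, 9, 10, 11, 3} : Multiset ℕ).map (· • g) := by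
    rw [← hM]
    simp only [insert_eq_cons, map_cons, map_singleton, cons_add, singleton_add]
    rw [hσ2, show w = 9 • g by linear_combination (norm := module) h7 - h16]
    rw [one_nsmul, show g + 9 • g = 10 • g by module, show 2 • g + 9 • g = 11 • g by module,
      show 2 • g + g = 3 • g by module]
  refine two_mul_card_le_fseq_of_disjoint hS hnd (by omega) (N := {S.sum + S.sum}) ?_ ?_
    (by simp; omega)
  · have hww : w ≠ S.sum + w := fun h => hσ (by simpa using h)
    simpa [show w + (S.sum + w) = S.sum + S.sum by linear_combination (norm := module) hw.2]
      using add_mem_subSums hww hw.1 hb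
  · rw [Finset.disjoint_singleton_right, mem_trivialSubSums, hσ2, hS']
    simp only [mem_map, exists_exists_and_eq_and, sub_eq_iff_eq_add, ← add_nsmul,
      nsmul_eq_nsmul_iff_modEq, hord]
    simp [Nat.ModEq]

theorem eq_of_add_mem_of_sum_add_mem (hS : ZeroSumFree S) (h2 : ∀ g ∈ S, addOrderOf g ≠ 2)
    (h5 : card S ≤ 5) (hg : g ∈ halvesOfSum S) (hw : w ∈ halvesOfSum S)
    (hw' : w' ∈ halvesOfSum S) (hgw : g ≠ w) (hgw' : g ≠ w') (ha : g + w ∈ S)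
    (hb : S.sum + w ∈ S) (ha' : g + w' ∈ S) : w' = w := by
  by_contra hne
  rw [mem_halvesOfSum] at hg hw hw'
  have hk2 : 2 ≤ card S := by simpa using card_mono (pair_le_of_ne hgw hg.1 hw.1)
  have hσ : S.sum ≠ 0 := hS.sum_ne_zero (card_pos.1 (by omega))
  have hP : ({g, w, w'} : Multiset G).Nodup := by simpa using ⟨⟨hgw, hgw'⟩, Ne.symm hne⟩
  have hQ : ({g + w, g + w', S.sum + w} : Multiset G).Nodup := by
    simp only [insert_eq_cons, nodup_cons, mem_cons, mem_singleton, nodup_singleton, not_or]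
    exact ⟨⟨fun h => hne (add_left_cancel h).symm,
      fun h => hS.mem_ne_sum hg.1 hk2 (add_right_cancel h)⟩,
      add_ne_sum_add_of_halves hσ hg.2 hw'.2 hw.2, trivial⟩
  have hle := add_le_of_halves_of_ne_halves (S := S) hP hQ
    (by
      simp only [insert_eq_cons, mem_cons, mem_singleton]
      rintro x (rfl | rfl | rfl) <;> assumption)
    (by
      simp only [insert_eq_cons, mem_cons, mem_singleton]
      rintro y (rfl | rfl | rfl)
      exacts [⟨ha, add_add_ne_sum_of_halves hσ hg.2 hw.2⟩,
        ⟨ha', add_add_ne_sum_of_halves hσ hg.2 hw'.2⟩, ⟨hb, sum_add_add_ne_sum hS h2 hw.1 hb⟩])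
  have := card_mono hle
  simp at this
  omega

/-- Once `g + w ∈ S`, also `σ + w = g + (g + w)` and `σ + g = w + (g + w)` are subsums. -/
def extraSubSum (S : Multiset G) (g w : G) : G :=
  if g + w ∈ S then (if S.sum + w ∈ S then S.sum + g else S.sum + w) else g + w

theorem extraSubSum_mem_subSums_and_notMem (hS : ZeroSumFree S)
    (h2 : ∀ g ∈ S, addOrderOf g ≠ 2) (h4 : 4 ≤ card S) (hg : g ∈ halvesOfSum S)
    (hw : w ∈ halvesOfSum S) (hne : w ≠ g)
    (hexc : g + w ∈ S → S.sum + w ∈ S → S.sum + g ∉ S) :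
    extraSubSum S g w ∈ SubSums S ∧ extraSubSum S g w ∉ trivialSubSums S := by
  obtain ⟨hgS, hgg⟩ := mem_halvesOfSum.1 hg
  obtain ⟨hwS, hww⟩ := mem_halvesOfSum.1 hw
  unfold extraSubSum
  split_ifs with ha hb
  · refine ⟨?_, sum_add_notMem_trivialSubSums hS h2 hgS (hexc ha hb)⟩
    have hw_ne : w ≠ g + w := fun h => hS.ne_zero_of_mem hgS (by simpa using h)
    simpa [show w + (g + w) = S.sum + g by linear_combination (norm := module) hww]
      using add_mem_subSums hw_ne hwS ha
  · refine ⟨?_, sum_add_notMem_trivialSubSums hS h2 hwS hb⟩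
    have hg_ne : g ≠ g + w := fun h => hS.ne_zero_of_mem hwS (by simpa using h)
    simpa [show g + (g + w) = S.sum + w by linear_combination (norm := module) hgg]
      using add_mem_subSums hg_ne hgS ha
  · exact ⟨add_mem_subSums hne.symm hgS hwS, add_notMem_trivialSubSums hS h4 hg hw hne.symm ha⟩

theorem extraSubSum_injOn (hS : ZeroSumFree S) (h2 : ∀ g ∈ S, addOrderOf g ≠ 2)
    (h4 : 4 ≤ card S) (h5 : card S ≤ 5) (hg : g ∈ halvesOfSum S) :
    Set.InjOn (extraSubSum S g) ((halvesOfSum S).erase g) := by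
  have hσ : S.sum ≠ 0 := hS.sum_ne_zero (card_pos.1 (by omega))
  have hgg := (mem_halvesOfSum.1 hg).2
  intro w hw w' hw' he
  obtain ⟨hne, hw⟩ := Finset.mem_erase.1 hw
  obtain ⟨hne', hw'⟩ := Finset.mem_erase.1 hw'
  obtain ⟨hwS, hww⟩ := mem_halvesOfSum.1 hw
  obtain ⟨hwS', hww'⟩ := mem_halvesOfSum.1 hw'
  unfold extraSubSum at he
  split_ifs at he with ha hb ha' hb' ha' hb' ha' <;>
    first
    | exact add_left_cancel he
    | exact (eq_of_add_mem_of_sum_add_mem hS h2 h5 hg hw hw' hne.symm hne'.symm ha hb ha').symm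
    | exact absurd (add_left_cancel he) hne
    | exact absurd (add_left_cancel he).symm hne'
    | exact absurd he (add_ne_sum_add_of_halves hσ hgg hww hww')
    | exact absurd he.symm (add_ne_sum_add_of_halves hσ hgg hww' hww)
    | exact absurd (add_left_cancel (he.trans (add_comm _ _))) (hS.mem_ne_sum hwS (by omega))
    | exact absurd (add_left_cancel ((add_comm _ _).trans he)).symm (hS.mem_ne_sum hwS' (by omega))

theorem exists_new_subSums (hS : ZeroSumFree S) (h2 : ∀ g ∈ S, addOrderOf g ≠ 2)
    (h4 : 4 ≤ card S) (h5 : card S ≤ 5) (hg : g ∈ halvesOfSum S)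
    (hexc : ∀ w ∈ halvesOfSum S, w ≠ g → g + w ∈ S → S.sum + w ∈ S → S.sum + g ∉ S) :
    ∃ N : Finset G, ↑N ⊆ SubSums S ∧ Disjoint (trivialSubSums S) N ∧
      (halvesOfSum S).card ≤ N.card + 1 := by
  have hnew : ∀ w ∈ (halvesOfSum S).erase g,
      extraSubSum S g w ∈ SubSums S ∧ extraSubSum S g w ∉ trivialSubSums S := fun w hw' =>
    have ⟨hne, hw⟩ := Finset.mem_erase.1 hw'
    extraSubSum_mem_subSums_and_notMem hS h2 h4 hg hw hne (hexc w hw hne)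
  refine ⟨((halvesOfSum S).erase g).image (extraSubSum S g), ?_, ?_, ?_⟩
  · rw [Finset.coe_image, Set.image_subset_iff]
    exact fun w hw => (hnew w hw).1
  · refine Finset.disjoint_right.2 fun v hv => ?_
    obtain ⟨w, hw, rfl⟩ := Finset.mem_image.1 hv
    exact (hnew w hw).2
  · rw [Finset.card_image_of_injOn (extraSubSum_injOn hS h2 h4 h5 hg),
      Finset.card_erase_of_mem hg]
    omega

theorem two_mul_card_le_fseq_of_card_le_five (hS : ZeroSumFree S) (hnd : S.Nodup)
    (h2 : ∀ g ∈ S, addOrderOf g ≠ 2) (h3 : 3 ≤ card S) (h5 : card S ≤ 5) :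
    2 * card S ≤ fseq S := by
  by_cases hm : (halvesOfSum S).card ≤ 1
  · exact two_mul_card_le_fseq_of_disjoint hS hnd h3 (N := ∅) (by simp) (by simp) (by simpa)
  have h4 : 4 ≤ card S := by
    by_contra! h
    exact hm (card_halvesOfSum_le_one hS h2 (by omega))
  obtain ⟨g, hg⟩ : (halvesOfSum S).Nonempty := Finset.card_pos.1 (by omega)
  by_cases hexc : ∃ w ∈ halvesOfSum S, w ≠ g ∧ g + w ∈ S ∧ S.sum + w ∈ S ∧ S.sum + g ∈ S
  · obtain ⟨w, hw, hne, ha, hb, hc⟩ := hexc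
    exact two_mul_card_le_fseq_of_exceptional hS hnd h2 h5 hg hw hne.symm ha hb hc
  simp only [not_exists, not_and] at hexc
  obtain ⟨N, hN, hdisj, hcard⟩ := exists_new_subSums hS h2 h4 h5 hg hexc
  exact two_mul_card_le_fseq_of_disjoint hS hnd h3 hN hdisj hcard

end SmallBlocks

section Blocks

variable {G : Type*} [AddCommGroup G] {S T : Multiset G}

theorem ZeroSumFree.two_mul_card_add_le_fseq (hST : ZeroSumFree (S + T))
    (hS : 2 * card S ≤ fseq S) (hT : 2 * card T ≤ fseq T) :
    2 * card (S + T) ≤ fseq (S + T) := by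
  have := hST.fseq_add_le
  rw [card_add]
  omega

theorem two_mul_card_le_fseq_of_nodup (hS : ZeroSumFree S) (hnd : S.Nodup)
    (h2 : ∀ g ∈ S, addOrderOf g ≠ 2) (h3 : 3 ≤ card S) : 2 * card S ≤ fseq S := by
  classical
  induction hk : card S using Nat.strong_induction_on generalizing S with
  | _ k ih =>
  rcases le_or_gt k 5 with h5 | h5
  · exact hk ▸ two_mul_card_le_fseq_of_card_le_five hS hnd h2 h3 (hk ▸ h5)
  obtain ⟨T, hT⟩ : ∃ T, T ∈ powersetCard 3 S :=
    card_pos_iff_exists_mem.1 (by rw [card_powersetCard]; exact Nat.choose_pos (by omega))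
  obtain ⟨hTS, hT3⟩ := mem_powersetCard.1 hT
  have hsplit : T + (S - T) = S := add_tsub_cancel_of_le hTS
  have hTb : 2 * card T ≤ fseq T := two_mul_card_le_fseq_of_card_le_five (hS.mono hTS)
    (nodup_of_le hTS hnd) (fun g hg => h2 g (mem_of_le hTS hg)) hT3.ge (by omega)
  have hR : card (S - T) = k - 3 := by rw [card_sub hTS, hk, hT3]
  have hRb : 2 * card (S - T) ≤ fseq (S - T) := hR ▸ ih (k - 3) (by omega)
    (hS.mono tsub_le_self) (nodup_of_le tsub_le_self hnd)
    (fun g hg => h2 g (mem_of_le tsub_le_self hg)) (by omega) hR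
  rw [← hk, ← hsplit]
  exact (by rwa [hsplit] : ZeroSumFree (T + (S - T))).two_mul_card_add_le_fseq hTb hRb

end Blocks

theorem stmt19_general {G : Type*} [AddCommGroup G] (S : Multiset G)
    (hS : ZeroSumFree S) (h2 : ∀ g ∈ S, addOrderOf g ≠ 2)
    (x : ℕ) (T : Fin x → Multiset G)
    (hdec : S = ∑ i : Fin x, T i)
    (hT : ∀ i : Fin x, (T i).Nodup ∧ 3 ≤ (T i).card) :
    2 * S.card ≤ fseq S := by
  subst hdec
  revert hS h2
  refine Finset.sum_induction T
    (fun S => ZeroSumFree S → (∀ g ∈ S, addOrderOf g ≠ 2) → 2 * card S ≤ fseq S)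
    (fun A B hA hB hAB h2 => hAB.two_mul_card_add_le_fseq
      (hA (hAB.mono (le_add_right A B)) fun g hg => h2 g (mem_add.2 (Or.inl hg)))
      (hB (hAB.mono (le_add_left B A)) fun g hg => h2 g (mem_add.2 (Or.inr hg))))
    (by simp) fun i _ hS h2 => two_mul_card_le_fseq_of_nodup hS (hT i).1 h2 (hT i).2

/-- If `S` is zero-sum free, contains no element of order `2`, and decomposes as
`S = S₁⋯S_x` with each `Sᵢ` squarefree of length `≥ 3`, then `f(S) ≥ 2|S|`. -/
theorem stmt19 {G : Type*} [AddCommGroup G] [Fintype G] (S : Multiset G)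
    (hS : ZeroSumFree S) (h2 : ∀ g ∈ S, addOrderOf g ≠ 2)
    (x : ℕ) (hx : 1 ≤ x) (T : Fin x → Multiset G)
    (hdec : S = ∑ i : Fin x, T i)
    (hT : ∀ i : Fin x, (T i).Nodup ∧ 3 ≤ (T i).card) :
    2 * S.card ≤ fseq S :=
  stmt19_general S hS h2 x T hdec hT
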